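/- arXiv:1804.06654 — 4 statements merged into one kernel-verified Lean document; each statement's English description precedes it below -/
import Mathlib

section
/- Let S be a numerical semigroup. Then l(S) = 0 if and only if PF(S) = {F(S)}, and l(S) = 1 if and only if PF(S) = {F(S), F(S)/2}. -/
def IsNumericalSemigroup (S : Set ℕ) : Prop :=
  0 ∈ S ∧ (∀ a ∈ S, ∀ b ∈ S, a + b ∈ S) ∧ Sᶜ.Finite

noncomputable def frobNS (S : Set ℕ) : ℤ :=
  sSup (insert (-1) ((fun n : ℕ => (n : ℤ)) '' Sᶜ))

def toZNS (S : Set ℕ) : Set ℤ := {z : ℤ | ∃ n ∈ S, (n : ℤ) = z}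

noncomputable def genusNS (S : Set ℕ) : ℕ := Sᶜ.ncard

def smallNS (S : Set ℕ) : Set ℕ := {s ∈ S | (s : ℤ) < frobNS S}

noncomputable def nNS (S : Set ℕ) : ℕ := (smallNS S).ncard

def LgapsNS (S : Set ℕ) : Set ℕ :=
  {x : ℕ | x ∉ S ∧ frobNS S - (x : ℤ) ∉ toZNS (smallNS S)}

noncomputable def lNS (S : Set ℕ) : ℕ := (LgapsNS S).ncard

noncomputable def hNS (S : Set ℕ) : ℕ := sSup (LgapsNS S)

def PFNS (S : Set ℕ) : Set ℤ :=
  {x : ℤ | x ∉ toZNS S ∧ ∀ s ∈ S, s ≠ 0 → x + (s : ℤ) ∈ toZNS S}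

noncomputable def typeNS (S : Set ℕ) : ℕ := (PFNS S).ncard

def msgNS (S : Set ℕ) : Set ℕ :=
  {x : ℕ | x ∈ S ∧ x ≠ 0 ∧ ∀ a ∈ S, ∀ b ∈ S, a ≠ 0 → b ≠ 0 → a + b ≠ x}

noncomputable def multNS (S : Set ℕ) : ℕ := sInf (S \ {0})

def IsIrreducibleNS (S : Set ℕ) : Prop :=
  IsNumericalSemigroup S ∧
    ¬ ∃ T₁ T₂ : Set ℕ, IsNumericalSemigroup T₁ ∧ IsNumericalSemigroup T₂ ∧
        S ⊂ T₁ ∧ S ⊂ T₂ ∧ S = T₁ ∩ T₂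

def IsSymmetricNS (S : Set ℕ) : Prop := IsIrreducibleNS S ∧ Odd (frobNS S)

def IsPseudoSymmetricNS (S : Set ℕ) : Prop := IsIrreducibleNS S ∧ Even (frobNS S)

def genNS (A : Set ℕ) : Set ℕ := (AddSubmonoid.closure A : Set ℕ)

def IsURSYNS (S : Set ℕ) : Prop :=
  ∃ T : Set ℕ, ∃ x : ℕ, IsSymmetricNS T ∧ x ∈ msgNS T ∧ S = T \ {x}

def IsURPSYNS (S : Set ℕ) : Prop :=
  ∃ T : Set ℕ, ∃ x : ℕ, IsPseudoSymmetricNS T ∧ x ∈ msgNS T ∧ S = T \ {x}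

def deltaNS (S : Set ℕ) : Set ℕ := {s ∈ S | 2 * (s : ℤ) < frobNS S}

def thetaNS (S : Set ℕ) : Set ℕ :=
  genNS (deltaNS S) ∪ {n : ℕ | frobNS S < (n : ℤ)}

noncomputable def CNS (F : ℕ) : Set ℕ :=
  if Odd F then (({0} : Set ℕ) ∪ {n : ℕ | (F + 1) / 2 ≤ n}) \ {F}
  else (({0} : Set ℕ) ∪ {n : ℕ | F / 2 + 1 ≤ n}) \ {F}

/-!
Write `F = F(S)`. Since `0 ∈ S`, a gap `x` lies in `L(S)` iff `F - x` is a gap too, so `L(S)` is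
stable under `x ↦ F - x` and does not contain `F`. Every pseudo-Frobenius number other than `F`
lies in `L(S)`. Conversely, adding a nonzero element of `S` to an element of `L(S)` lands either
in `S` or in `L(S)`, so the largest element of `L(S)` is pseudo-Frobenius. Hence `L(S) = ∅` iff
`PF(S) = {F}`, and `L(S) = {a}` forces `F = 2a` and `PF(S) = {F, a}`.
-/

section NumericalSemigroup

variable {S : Set ℕ}

lemma mem_toZNS_iff {n : ℕ} : (n : ℤ) ∈ toZNS S ↔ n ∈ S := by
  constructor
  · rintro ⟨m, hm, hmn⟩
    rwa [← Nat.cast_inj.1 hmn]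
  · exact fun h => ⟨n, h, rfl⟩

lemma add_mem_toZNS (hadd : ∀ a ∈ S, ∀ b ∈ S, a + b ∈ S) {a b : ℤ}
    (ha : a ∈ toZNS S) (hb : b ∈ toZNS S) : a + b ∈ toZNS S := by
  obtain ⟨m, hm, rfl⟩ := ha
  obtain ⟨n, hn, rfl⟩ := hb
  exact ⟨m + n, hadd m hm n hn, by push_cast; rfl⟩

/- The `-1` in the definition of `frobNS` gives `F(ℕ) = -1`; the next two lemmas are all
that is used about `F`, and they hold uniformly, including for `S = ℕ`. -/
lemma isGreatest_frobNS (hfin : Sᶜ.Finite) :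
    IsGreatest (insert (-1) ((fun n : ℕ => (n : ℤ)) '' Sᶜ)) (frobNS S) := by
  have hfin' := (hfin.image (fun n : ℕ => (n : ℤ))).insert (-1 : ℤ)
  exact ⟨(Set.insert_nonempty _ _).csSup_mem hfin', fun _ hz => le_csSup hfin'.bddAbove hz⟩

lemma frobNS_notMem_toZNS (hfin : Sᶜ.Finite) : frobNS S ∉ toZNS S := by
  rintro ⟨n, hn, hnF⟩
  rcases (isGreatest_frobNS hfin).1 with h | ⟨m, hm, hmF⟩
  · omega
  · exact hm (Nat.cast_inj.1 (hmF.trans hnF.symm) ▸ hn)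

lemma mem_toZNS_of_frobNS_lt (hfin : Sᶜ.Finite) {z : ℤ} (hz : frobNS S < z) :
    z ∈ toZNS S := by
  have hF := isGreatest_frobNS hfin
  have hz0 : 0 ≤ z := by linarith [hF.2 (Set.mem_insert _ _)]
  lift z to ℕ using hz0
  refine mem_toZNS_iff.2 (by_contra fun hzS => ?_)
  exact hz.not_ge (hF.2 (Set.mem_insert_of_mem _ ⟨z, hzS, rfl⟩))

lemma le_frobNS_of_notMem (hfin : Sᶜ.Finite) {x : ℕ} (hx : x ∉ S) : (x : ℤ) ≤ frobNS S :=
  le_of_not_gt fun h => hx (mem_toZNS_iff.1 (mem_toZNS_of_frobNS_lt hfin h))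

lemma mem_LgapsNS_iff (h0 : 0 ∈ S) {x : ℕ} :
    x ∈ LgapsNS S ↔ x ∉ S ∧ frobNS S - x ∉ toZNS S := by
  refine and_congr_right fun hx => not_congr ⟨?_, ?_⟩
  · rintro ⟨n, ⟨hn, -⟩, hnx⟩
    exact ⟨n, hn, hnx⟩
  · rintro ⟨n, hn, hnx⟩
    have hx0 : x ≠ 0 := fun h => hx (h ▸ h0)
    exact ⟨n, ⟨hn, by omega⟩, hnx⟩

lemma LgapsNS_finite (hfin : Sᶜ.Finite) : (LgapsNS S).Finite :=
  hfin.subset fun _ hx => hx.1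

lemma frobNS_sub_mem_LgapsNS (h0 : 0 ∈ S) (hfin : Sᶜ.Finite) {x : ℕ} (hx : x ∈ LgapsNS S) :
    ∃ y ∈ LgapsNS S, (y : ℤ) = frobNS S - x := by
  rw [mem_LgapsNS_iff h0] at hx
  have hxF := le_frobNS_of_notMem hfin hx.1
  refine ⟨(frobNS S - x).toNat, (mem_LgapsNS_iff h0).2 ⟨?_, ?_⟩, by omega⟩
  · rw [← mem_toZNS_iff, Int.toNat_of_nonneg (by omega)]
    exact hx.2
  · rw [Int.toNat_of_nonneg (by omega), sub_sub_cancel, mem_toZNS_iff]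
    exact hx.1

lemma cast_ne_frobNS_of_mem_LgapsNS (h0 : 0 ∈ S) {x : ℕ} (hx : x ∈ LgapsNS S) :
    (x : ℤ) ≠ frobNS S := by
  intro hxF
  exact ((mem_LgapsNS_iff h0).1 hx).2 (by rw [← hxF, sub_self]; exact ⟨0, h0, rfl⟩)

lemma add_mem_LgapsNS (h0 : 0 ∈ S) (hadd : ∀ a ∈ S, ∀ b ∈ S, a + b ∈ S) {x s : ℕ}
    (hx : x ∈ LgapsNS S) (hs : s ∈ S) (hxs : x + s ∉ S) : x + s ∈ LgapsNS S := by
  rw [mem_LgapsNS_iff h0] at hx ⊢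
  refine ⟨hxs, fun h => hx.2 ?_⟩
  have := add_mem_toZNS hadd h (mem_toZNS_iff.2 hs)
  rwa [Nat.cast_add, sub_add_eq_sub_sub, sub_add_cancel] at this

lemma frobNS_mem_PFNS (hfin : Sᶜ.Finite) : frobNS S ∈ PFNS S := by
  refine ⟨frobNS_notMem_toZNS hfin, fun s _ hs0 => mem_toZNS_of_frobNS_lt hfin ?_⟩
  have : (0 : ℤ) < s := by exact_mod_cast Nat.pos_of_ne_zero hs0
  linarith

lemma mem_PFNS_of_isGreatest_LgapsNS (h0 : 0 ∈ S) (hadd : ∀ a ∈ S, ∀ b ∈ S, a + b ∈ S)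
    {x : ℕ} (hx : IsGreatest (LgapsNS S) x) : (x : ℤ) ∈ PFNS S := by
  refine ⟨mem_toZNS_iff.not.2 hx.1.1, fun s hs hs0 => ?_⟩
  rw [← Nat.cast_add, mem_toZNS_iff]
  by_contra hxs
  have := hx.2 (add_mem_LgapsNS h0 hadd hx.1 hs hxs)
  omega

lemma eq_frobNS_or_mem_LgapsNS_of_mem_PFNS (h0 : 0 ∈ S) (hfin : Sᶜ.Finite) {x : ℤ}
    (hx : x ∈ PFNS S) : x = frobNS S ∨ ∃ n ∈ LgapsNS S, (n : ℤ) = x := by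
  refine or_iff_not_imp_left.2 fun hxF => ?_
  have hFx : frobNS S - x ∉ toZNS S := by
    rintro ⟨s, hs, hsx⟩
    have hxs := hx.2 s hs (by omega)
    rw [hsx, add_sub_cancel] at hxs
    exact frobNS_notMem_toZNS hfin hxs
  have hx0 : 0 ≤ x := by
    by_contra hneg
    exact hFx (mem_toZNS_of_frobNS_lt hfin (by omega))
  lift x to ℕ using hx0
  exact ⟨x, (mem_LgapsNS_iff h0).2 ⟨mem_toZNS_iff.not.1 hx.1, hFx⟩, rfl⟩

lemma exists_isGreatest_LgapsNS (hfin : Sᶜ.Finite) (hne : (LgapsNS S).Nonempty) :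
    ∃ x, IsGreatest (LgapsNS S) x :=
  (LgapsNS_finite hfin).bddAbove.exists_isGreatest_of_nonempty hne

lemma LgapsNS_eq_empty_iff (h0 : 0 ∈ S) (hadd : ∀ a ∈ S, ∀ b ∈ S, a + b ∈ S)
    (hfin : Sᶜ.Finite) : LgapsNS S = ∅ ↔ PFNS S = {frobNS S} := by
  constructor
  · intro hL
    refine Set.eq_singleton_iff_unique_mem.2 ⟨frobNS_mem_PFNS hfin, fun x hx => ?_⟩
    simpa [hL] using eq_frobNS_or_mem_LgapsNS_of_mem_PFNS h0 hfin hx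
  · intro hPF
    by_contra hne
    obtain ⟨x, hx⟩ := exists_isGreatest_LgapsNS hfin (Set.nonempty_iff_ne_empty.2 hne)
    have hxPF := mem_PFNS_of_isGreatest_LgapsNS h0 hadd hx
    rw [hPF] at hxPF
    exact cast_ne_frobNS_of_mem_LgapsNS h0 hx.1 hxPF

lemma exists_LgapsNS_eq_singleton_iff (h0 : 0 ∈ S) (hadd : ∀ a ∈ S, ∀ b ∈ S, a + b ∈ S)
    (hfin : Sᶜ.Finite) :
    (∃ a, LgapsNS S = {a}) ↔ ∃ c : ℤ, frobNS S = 2 * c ∧ PFNS S = {frobNS S, c} := by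
  constructor
  · rintro ⟨a, hL⟩
    have ha : a ∈ LgapsNS S := hL ▸ rfl
    obtain ⟨b, hb, hba⟩ := frobNS_sub_mem_LgapsNS h0 hfin ha
    rw [hL, Set.mem_singleton_iff] at hb
    rw [hb] at hba
    refine ⟨a, by omega, Set.Subset.antisymm (fun x hx => ?_) ?_⟩
    · rcases eq_frobNS_or_mem_LgapsNS_of_mem_PFNS h0 hfin hx with hxF | ⟨n, hn, rfl⟩
      · exact Or.inl hxF
      · rw [hL, Set.mem_singleton_iff] at hn
        exact Or.inr (congrArg _ hn)
    · refine Set.insert_subset (frobNS_mem_PFNS hfin) (Set.singleton_subset_iff.2 ?_)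
      exact mem_PFNS_of_isGreatest_LgapsNS h0 hadd (hL ▸ isGreatest_singleton)
  · rintro ⟨c, hFc, hPF⟩
    have hF0 : frobNS S ≠ 0 := fun h => frobNS_notMem_toZNS hfin (h ▸ ⟨0, h0, rfl⟩)
    have hc : c ∈ PFNS S := hPF ▸ Or.inr rfl
    obtain ⟨a, ha, rfl⟩ :=
      (eq_frobNS_or_mem_LgapsNS_of_mem_PFNS h0 hfin hc).resolve_left (by omega)
    refine ⟨a, Set.eq_singleton_iff_unique_mem.2 ⟨ha, fun y hy => ?_⟩⟩
    obtain ⟨m, hm⟩ := exists_isGreatest_LgapsNS hfin ⟨a, ha⟩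
    have hmPF := mem_PFNS_of_isGreatest_LgapsNS h0 hadd hm
    rw [hPF] at hmPF
    have hma : (m : ℤ) = a :=
      hmPF.resolve_left (cast_ne_frobNS_of_mem_LgapsNS h0 hm.1)
    obtain ⟨z, hz, hzy⟩ := frobNS_sub_mem_LgapsNS h0 hfin hy
    have hym := hm.2 hy
    have hzm := hm.2 hz
    omega

end NumericalSemigroup

/-- l(S) = 0 iff PF(S) = {F(S)}, and l(S) = 1 iff PF(S) = {F(S), F(S)/2}. -/
theorem stmt3 (S : Set ℕ) (hS : IsNumericalSemigroup S) :
    (lNS S = 0 ↔ PFNS S = {frobNS S}) ∧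
    (lNS S = 1 ↔ ∃ c : ℤ, frobNS S = 2 * c ∧ PFNS S = {frobNS S, c}) := by
  obtain ⟨h0, hadd, hfin⟩ := hS
  rw [lNS, Set.ncard_eq_zero (LgapsNS_finite hfin), Set.ncard_eq_one]
  exact ⟨LgapsNS_eq_empty_iff h0 hadd hfin, exists_LgapsNS_eq_singleton_iff h0 hadd hfin⟩
end

section
/- Let S be a numerical semigroup with l(S) = 2. Then {F(S), h(S)} ⊆ PF(S) ⊆ {F(S), h(S), F(S) − h(S)}. Moreover, F(S) − h(S) ∈ PF(S) if and only if 2·h(S) − F(S) ∉ S. -/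
lemma aux_bdd {S : Set ℕ} (hS : IsNumericalSemigroup S) :
    BddAbove (insert (-1 : ℤ) ((fun n : ℕ => (n : ℤ)) '' Sᶜ)) :=
  ((hS.2.2.image _).insert _).bddAbove

lemma aux_le_frob {S : Set ℕ} (hS : IsNumericalSemigroup S) {n : ℕ} (hn : n ∉ S) :
    (n : ℤ) ≤ frobNS S :=
  le_csSup (aux_bdd hS) (Set.mem_insert_of_mem _ ⟨n, hn, rfl⟩)

lemma aux_gt_frob {S : Set ℕ} (hS : IsNumericalSemigroup S) {n : ℕ} (hn : frobNS S < n) :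
    n ∈ S := by
  by_contra h
  exact absurd (aux_le_frob hS h) (not_le.mpr hn)

lemma aux_frob_mem {S : Set ℕ} (hS : IsNumericalSemigroup S) :
    frobNS S ∈ insert (-1 : ℤ) ((fun n : ℕ => (n : ℤ)) '' Sᶜ) :=
  Set.Nonempty.csSup_mem ⟨-1, Set.mem_insert _ _⟩ ((hS.2.2.image _).insert _)

/-- If l(S) = 2, then {F(S), h(S)} ⊆ PF(S) ⊆ {F(S), h(S), F(S) − h(S)};
moreover F(S) − h(S) ∈ PF(S) iff 2·h(S) − F(S) ∉ S. -/
theorem stmt8 (S : Set ℕ) (hS : IsNumericalSemigroup S) (hl : lNS S = 2) :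
    ({frobNS S, (hNS S : ℤ)} : Set ℤ) ⊆ PFNS S ∧
    PFNS S ⊆ ({frobNS S, (hNS S : ℤ), frobNS S - (hNS S : ℤ)} : Set ℤ) ∧
    (frobNS S - (hNS S : ℤ) ∈ PFNS S ↔ 2 * (hNS S : ℤ) - frobNS S ∉ toZNS S) := by
  have hzero : (0 : ℕ) ∈ S := hS.1
  have hadd : ∀ a ∈ S, ∀ b ∈ S, a + b ∈ S := hS.2.1
  set F := frobNS S with hFdef
  -- basic facts about Lgaps
  have hLfin : (LgapsNS S).Finite := hS.2.2.subset fun x hx => hx.1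
  have hl' : (LgapsNS S).ncard = 2 := hl
  have hLne : (LgapsNS S).Nonempty := by
    rw [Set.nonempty_iff_ne_empty]
    intro h
    rw [h] at hl'
    simp at hl'
  have hbddL : BddAbove (LgapsNS S) := hLfin.bddAbove
  have hhmem : hNS S ∈ LgapsNS S := Nat.sSup_mem hLne hbddL
  have hle_h : ∀ x ∈ LgapsNS S, x ≤ hNS S := fun x hx => le_csSup hbddL hx
  obtain ⟨x0, hx0⟩ := hLne
  have hF0 : (0 : ℤ) ≤ F := le_trans (Int.ofNat_nonneg x0) (aux_le_frob hS hx0.1)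
  have hFg : ∃ g : ℕ, g ∉ S ∧ (g : ℤ) = F := by
    rcases aux_frob_mem hS with h | ⟨g, hg, hg2⟩
    · rw [← hFdef] at h; omega
    · exact ⟨g, hg, hg2⟩
  obtain ⟨g, hgS, hgF⟩ := hFg
  have hFnotS : F ∉ toZNS S := by
    rintro ⟨m, hm, hm2⟩
    have hmg : m = g := by
      have : (m : ℤ) = (g : ℤ) := by rw [hm2, hgF]
      exact_mod_cast this
    exact hgS (hmg ▸ hm)
  have hF1 : (1 : ℤ) ≤ F := by
    by_contra hc
    have hF0' : F = 0 := by omega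
    have hsub : LgapsNS S ⊆ {0} := by
      intro x hx
      have hxle : (x : ℤ) ≤ F := aux_le_frob hS hx.1
      have : x = 0 := by omega
      simp [this]
    have := Set.ncard_le_ncard hsub (Set.finite_singleton 0)
    rw [hl', Set.ncard_singleton] at this
    omega
  have hgL : g ∉ LgapsNS S := by
    intro hgmem
    apply hgmem.2
    refine ⟨0, ⟨hzero, ?_⟩, ?_⟩
    · exact_mod_cast lt_of_lt_of_le zero_lt_one hF1
    · rw [hgF]; push_cast; ring
  -- elements of Lgaps are positive and strictly below F
  have hLpos : ∀ x ∈ LgapsNS S, x ≠ 0 ∧ (x : ℤ) < F := by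
    intro x hx
    have hx0 : x ≠ 0 := fun h => hx.1 (h ▸ hzero)
    refine ⟨hx0, lt_of_le_of_ne (aux_le_frob hS hx.1) ?_⟩
    intro hxF
    have : x = g := by
      have : (x : ℤ) = (g : ℤ) := by rw [hxF, hgF]
      exact_mod_cast this
    exact hgL (this ▸ hx)
  -- reflection lemma
  have hrefl : ∀ x ∈ LgapsNS S, ∃ y ∈ LgapsNS S, (y : ℤ) = F - x := by
    intro x hx
    obtain ⟨hx0, hxF⟩ := hLpos x hx
    have hx1 : (1 : ℤ) ≤ (x : ℤ) := by exact_mod_cast Nat.one_le_iff_ne_zero.mpr hx0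
    set y := (F - (x : ℤ)).toNat with hydef
    have hyval : (y : ℤ) = F - x := Int.toNat_of_nonneg (by linarith)
    have hyS : y ∉ S := by
      intro hymem
      apply hx.2
      exact ⟨y, ⟨hymem, by rw [hyval]; linarith⟩, hyval⟩
    refine ⟨y, ⟨hyS, ?_⟩, hyval⟩
    rintro ⟨m, ⟨hmS, _⟩, hm⟩
    have : (m : ℤ) = (x : ℤ) := by rw [hm, hyval]; ring
    have : m = x := by exact_mod_cast this
    exact hx.1 (this ▸ hmS)
  -- closure lemma
  have hclo : ∀ x ∈ LgapsNS S, ∀ s ∈ S, s ≠ 0 → x + s ∉ S → x + s ∈ LgapsNS S := by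
    intro x hx s hsS hs0 hxs
    refine ⟨hxs, ?_⟩
    rintro ⟨m, ⟨hmS, hmF⟩, hm⟩
    apply hx.2
    have hx1 : (1 : ℤ) ≤ (x : ℤ) := by
      exact_mod_cast Nat.one_le_iff_ne_zero.mpr (hLpos x hx).1
    have hs1 : (1 : ℤ) ≤ (s : ℤ) := by exact_mod_cast Nat.one_le_iff_ne_zero.mpr hs0
    refine ⟨m + s, ⟨hadd m hmS s hsS, ?_⟩, ?_⟩
    · push_cast at hm ⊢; linarith
    · push_cast at hm ⊢; linarith
  -- structure of Lgaps
  obtain ⟨u, v, huv, hLuv⟩ := Set.ncard_eq_two.mp hl'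
  obtain ⟨a, haL, haval⟩ := hrefl _ hhmem
  have hane : a ≠ hNS S := by
    intro hah
    -- then F = 2 h
    have hFh : F = 2 * (hNS S : ℤ) := by rw [hah] at haval; linarith
    -- the other element of {u, v}
    have hhmem' : hNS S ∈ ({u, v} : Set ℕ) := hLuv ▸ hhmem
    simp only [Set.mem_insert_iff, Set.mem_singleton_iff] at hhmem'
    obtain ⟨w, hwL, hwh⟩ : ∃ w ∈ LgapsNS S, w ≠ hNS S := by
      rcases hhmem' with h1 | h1
      · exact ⟨v, by rw [hLuv]; simp, fun hc => huv (by omega)⟩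
      · exact ⟨u, by rw [hLuv]; simp, fun hc => huv (by omega)⟩
    obtain ⟨b, hbL, hbval⟩ := hrefl w hwL
    have hbuv : b ∈ ({u, v} : Set ℕ) := hLuv ▸ hbL
    have hwuv : w ∈ ({u, v} : Set ℕ) := hLuv ▸ hwL
    simp only [Set.mem_insert_iff, Set.mem_singleton_iff] at hbuv hwuv
    have hbw : b = hNS S ∨ b = w := by
      rcases hbuv with h1 | h1 <;> rcases hwuv with h2 | h2 <;>
        rcases hhmem' with h3 | h3 <;> omega
    rcases hbw with h1 | h1
    · -- F - w = h = F/2, so w = h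
      apply hwh
      have : (w : ℤ) = (hNS S : ℤ) := by rw [h1] at hbval; omega
      exact_mod_cast this
    · apply hwh
      have : (w : ℤ) = (hNS S : ℤ) := by rw [h1] at hbval; omega
      exact_mod_cast this
  have hLset : LgapsNS S = {hNS S, a} := by
    symm
    apply Set.eq_of_subset_of_ncard_le
    · intro x hx
      simp only [Set.mem_insert_iff, Set.mem_singleton_iff] at hx
      rcases hx with h | h
      · exact h ▸ hhmem
      · exact h ▸ haL
    · rw [hl', Set.ncard_pair (Ne.symm hane)]
    · exact hLfin
  have haltF : (a : ℤ) < F := (hLpos a haL).2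
  have hhltF : (hNS S : ℤ) < F := (hLpos _ hhmem).2
  have hah : a < hNS S := lt_of_le_of_ne (hle_h a haL) hane
  have haS : a ∉ S := haL.1
  have ha1 : (1 : ℤ) ≤ (a : ℤ) := by
    exact_mod_cast Nat.one_le_iff_ne_zero.mpr (hLpos a haL).1
  have h2hF : F < 2 * (hNS S : ℤ) := by
    have : (a : ℤ) < (hNS S : ℤ) := by exact_mod_cast hah
    linarith [haval]
  -- h ∈ PF
  have hhPF : (hNS S : ℤ) ∈ PFNS S := by
    constructor
    · rintro ⟨m, hmS, hm⟩
      have : m = hNS S := by exact_mod_cast hm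
      exact hhmem.1 (this ▸ hmS)
    · intro s hsS hs0
      have hmem : hNS S + s ∈ S := by
        by_contra hc
        have := hle_h _ (hclo _ hhmem s hsS hs0 hc)
        omega
      exact ⟨hNS S + s, hmem, by push_cast; ring⟩
  -- F ∈ PF
  have hFPF : F ∈ PFNS S := by
    refine ⟨hFnotS, ?_⟩
    intro s hsS hs0
    have hs1 : (1 : ℤ) ≤ (s : ℤ) := by exact_mod_cast Nat.one_le_iff_ne_zero.mpr hs0
    set n := (F + (s : ℤ)).toNat with hn
    have hnval : (n : ℤ) = F + s := Int.toNat_of_nonneg (by linarith)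
    exact ⟨n, aux_gt_frob hS (by rw [hnval]; linarith), hnval⟩
  refine ⟨?_, ?_, ?_, ?_⟩
  · -- {F, h} ⊆ PF
    intro x hx
    simp only [Set.mem_insert_iff, Set.mem_singleton_iff] at hx
    rcases hx with h | h
    · exact h ▸ hFPF
    · exact h ▸ hhPF
  · -- PF ⊆ {F, h, F - h}
    intro x hx
    obtain ⟨hx1, hx2⟩ := hx
    have hxle : x ≤ F := by
      by_contra hc
      push_neg at hc
      apply hx1
      set n := x.toNat with hn
      have hnval : (n : ℤ) = x := Int.toNat_of_nonneg (by linarith)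
      exact ⟨n, aux_gt_frob hS (by rw [hnval]; linarith), hnval⟩
    have hx0 : (0 : ℤ) ≤ x := by
      by_contra hc
      push_neg at hc
      set s := (F - x).toNat with hs
      have hsval : (s : ℤ) = F - x := Int.toNat_of_nonneg (by linarith)
      have hsS : s ∈ S := aux_gt_frob hS (by rw [hsval]; linarith)
      have hs0 : s ≠ 0 := by
        intro h0
        rw [h0] at hsval
        simp at hsval
        linarith
      have := hx2 s hsS hs0
      rw [show x + (s : ℤ) = F by rw [hsval]; ring] at this
      exact hFnotS this
    set n := x.toNat with hn
    have hnval : (n : ℤ) = x := Int.toNat_of_nonneg hx0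
    have hnS : n ∉ S := fun h => hx1 ⟨n, h, hnval⟩
    by_cases hnF : (n : ℤ) = F
    · left; rw [← hnval, hnF]
    · have hnL : n ∈ LgapsNS S := by
        refine ⟨hnS, ?_⟩
        rintro ⟨m, ⟨hmS, hmF⟩, hm⟩
        have hm0 : m ≠ 0 := by
          intro h0
          rw [h0] at hm
          simp at hm
          exact hnF (by omega)
        have := hx2 m hmS hm0
        rw [show x + (m : ℤ) = F by rw [hm, hnval]; ring] at this
        exact hFnotS this
      rw [hLset] at hnL
      simp only [Set.mem_insert_iff, Set.mem_singleton_iff] at hnL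
      rcases hnL with h | h
      · right; left; rw [← hnval, h]
      · right; right; rw [← hnval, h, haval]; exact rfl
  · -- forward direction
    intro hPF hmem
    obtain ⟨m, hmS, hm⟩ := hmem
    have hm0 : m ≠ 0 := by
      intro h0
      rw [h0] at hm
      simp at hm
      omega
    have := hPF.2 m hmS hm0
    rw [show F - (hNS S : ℤ) + (m : ℤ) = (hNS S : ℤ) by rw [hm]; ring] at this
    obtain ⟨k, hkS, hk⟩ := this
    have : k = hNS S := by exact_mod_cast hk
    exact hhmem.1 (this ▸ hkS)
  · -- backward direction
    intro hc
    rw [← haval]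
    constructor
    · rintro ⟨m, hmS, hm⟩
      have : m = a := by exact_mod_cast hm
      exact haS (this ▸ hmS)
    · intro s hsS hs0
      by_cases hmem : a + s ∈ S
      · exact ⟨a + s, hmem, by push_cast; ring⟩
      · exfalso
        have hasL := hclo a haL s hsS hs0 hmem
        rw [hLset] at hasL
        simp only [Set.mem_insert_iff, Set.mem_singleton_iff] at hasL
        rcases hasL with h | h
        · -- a + s = h, so s = 2h - F
          apply hc
          refine ⟨s, hsS, ?_⟩
          have : (a : ℤ) + (s : ℤ) = (hNS S : ℤ) := by exact_mod_cast congrArg (Nat.cast : ℕ → ℤ) h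
          linarith [haval]
        · omega
end

section
/- Let I and S be numerical semigroups such that I is irreducible, S ⊆ I, and F(S) = F(I). Then S = I∖A for some set A ⊆ {x ∈ I : F(I)/2 < x < F(I)} if and only if Δ(S) = Δ(I). -/
lemma gap_le_frob {S : Set ℕ} (hS : Sᶜ.Finite) {x : ℕ} (hx : x ∉ S) :
    (x : ℤ) ≤ frobNS S := by
  apply le_csSup ((hS.image _).insert _).bddAbove
  exact Set.mem_insert_of_mem _ ⟨x, hx, rfl⟩

lemma frob_not_mem {S : Set ℕ} (hS : Sᶜ.Finite) {n : ℕ} (hn : n ∈ S) :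
    (n : ℤ) ≠ frobNS S := by
  have hmem : frobNS S ∈ insert (-1) ((fun n : ℕ => (n : ℤ)) '' Sᶜ) :=
    Set.Nonempty.csSup_mem ⟨-1, Set.mem_insert _ _⟩ ((hS.image _).insert _)
  rcases hmem with h | ⟨m, hm, hme⟩
  · intro he; rw [h] at he; omega
  · intro he
    simp only at hme
    have : m = n := Nat.cast_inj.mp (hme.trans he.symm)
    subst this
    exact hm hn

/-- For I irreducible and S a numerical semigroup with S ⊆ I and
F(S) = F(I): S = I∖A for some A ⊆ {x ∈ I : F(I)/2 < x < F(I)} iff Δ(S) = Δ(I). -/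
theorem stmt16 (I S : Set ℕ) (hI : IsIrreducibleNS I) (hS : IsNumericalSemigroup S)
    (hSI : S ⊆ I) (hF : frobNS S = frobNS I) :
    (∃ A : Set ℕ, A ⊆ {x ∈ I | frobNS I < 2 * (x : ℤ) ∧ (x : ℤ) < frobNS I} ∧
      S = I \ A) ↔ deltaNS S = deltaNS I := by
  obtain ⟨⟨hI0, hIadd, hIfin⟩, -⟩ := hI
  obtain ⟨hS0, hSadd, hSfin⟩ := hS
  constructor
  · rintro ⟨A, hA, rfl⟩
    ext s
    simp only [deltaNS, Set.mem_setOf_eq, hF]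
    constructor
    · rintro ⟨⟨hsI, _⟩, h2⟩; exact ⟨hsI, h2⟩
    · rintro ⟨hsI, h2⟩
      refine ⟨⟨hsI, fun hsA => ?_⟩, h2⟩
      have := (hA hsA).2.1
      omega
  · intro hdelta
    refine ⟨I \ S, ?_, ?_⟩
    · rintro x ⟨hxI, hxS⟩
      have hxF : (x : ℤ) ≤ frobNS I := hF ▸ gap_le_frob hSfin hxS
      have hxne : (x : ℤ) ≠ frobNS I := frob_not_mem hIfin hxI
      refine ⟨hxI, ?_, lt_of_le_of_ne hxF hxne⟩
      by_contra h
      push_neg at h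
      rcases lt_or_eq_of_le h with h2 | h2
      · have : x ∈ deltaNS I := ⟨hxI, h2⟩
        rw [← hdelta] at this
        exact hxS this.1
      · have hxx : x + x ∈ I := hIadd x hxI x hxI
        exact frob_not_mem hIfin hxx (by push_cast; omega)
    · ext a
      constructor
      · intro ha; exact ⟨hSI ha, fun h => h.2 ha⟩
      · rintro ⟨haI, h⟩
        by_contra haS
        exact h ⟨haI, haS⟩
end

section
/- Let K and F be non-negative integers. Then there exists a numerical semigroup S with l(S) = K and F(S) = F if and only if K + F is odd and F ≥ K + 1. -/
lemma frobSet_finite {S : Set ℕ} (h : Sᶜ.Finite) :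
    (insert (-1) ((fun n : ℕ => (n : ℤ)) '' Sᶜ) : Set ℤ).Finite :=
  (h.image _).insert _

lemma frobNS_mem {S : Set ℕ} (h : Sᶜ.Finite) :
    frobNS S ∈ insert (-1) ((fun n : ℕ => (n : ℤ)) '' Sᶜ) :=
  Set.Nonempty.csSup_mem ⟨-1, Set.mem_insert _ _⟩ (frobSet_finite h)

lemma le_frobNS {S : Set ℕ} (h : Sᶜ.Finite) {x : ℕ} (hx : x ∉ S) :
    (x : ℤ) ≤ frobNS S :=
  le_csSup (frobSet_finite h).bddAbove (Set.mem_insert_of_mem _ ⟨x, hx, rfl⟩)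

lemma mem_of_frobNS_lt {S : Set ℕ} (h : Sᶜ.Finite) {x : ℕ} (hx : frobNS S < x) : x ∈ S := by
  by_contra hc; exact absurd (le_frobNS h hc) (not_le.mpr hx)

lemma frobNS_notMem {S : Set ℕ} (h : Sᶜ.Finite) {F : ℕ} (hF : frobNS S = F) : F ∉ S := by
  have hm := frobNS_mem h
  rw [hF] at hm
  rcases hm with h1 | ⟨n, hn, he⟩
  · exfalso; omega
  · have : n = F := by simpa using he
    rwa [this] at hn

lemma LgapsNS_eq {S : Set ℕ} (hS : IsNumericalSemigroup S) {F : ℕ} (hF : frobNS S = F) :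
    LgapsNS S = {x : ℕ | 0 < x ∧ x < F ∧ x ∉ S ∧ F - x ∉ S} := by
  obtain ⟨h0, hadd, hfin⟩ := hS
  have hFS : F ∉ S := frobNS_notMem hfin hF
  have hF1 : 0 < F := by
    rcases Nat.eq_zero_or_pos F with h | h
    · exact absurd (h ▸ h0) (h ▸ hFS)
    · exact h
  ext x
  simp only [LgapsNS, toZNS, smallNS, Set.mem_setOf_eq, hF, not_exists]
  constructor
  · rintro ⟨hxS, hsm⟩
    have hx0 : 0 < x := Nat.pos_of_ne_zero (by rintro rfl; exact hxS h0)
    have hxle : (x:ℤ) ≤ F := hF ▸ le_frobNS hfin hxS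
    have hxF : x ≠ F := by
      rintro rfl
      exact hsm 0 ⟨⟨h0, by exact_mod_cast hF1⟩, by push_cast; ring⟩
    refine ⟨hx0, by omega, hxS, fun hc => ?_⟩
    exact hsm (F - x) ⟨⟨hc, by omega⟩, by omega⟩
  · rintro ⟨hx0, hxF, hxS, hFx⟩
    refine ⟨hxS, fun n ⟨⟨hnS, hnlt⟩, hne⟩ => ?_⟩
    have : n = F - x := by omega
    exact hFx (this ▸ hnS)

theorem fwdNS {S : Set ℕ} (hS : IsNumericalSemigroup S) {F : ℕ} (hF : frobNS S = F) :
    Odd (lNS S + F) ∧ lNS S + 1 ≤ F := by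
  classical
  obtain ⟨h0, hadd, hfin⟩ := hS
  have hFS : F ∉ S := frobNS_notMem hfin hF
  have hF1 : 0 < F := Nat.pos_of_ne_zero (by rintro rfl; exact hFS h0)
  have hL := LgapsNS_eq ⟨h0, hadd, hfin⟩ hF
  set T : Finset ℕ := (Finset.Ioo 0 F).filter (fun x => x ∉ S ∧ F - x ∉ S) with hT
  have hLT : LgapsNS S = ↑T := by
    rw [hL]; ext x
    simp only [hT, Finset.coe_filter, Finset.mem_Ioo, Set.mem_setOf_eq, and_assoc]
  have hcard : lNS S = T.card := by rw [lNS, hLT, Set.ncard_coe_finset]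
  have hb : T.card ≤ F - 1 := by
    calc T.card ≤ (Finset.Ioo 0 F).card := Finset.card_le_card (Finset.filter_subset _ _)
    _ = F - 1 := by rw [Nat.card_Ioo]; omega
  clear_value T
  set A := T.filter (fun x => 2*x < F) with hA
  set B := T.filter (fun x => F < 2*x) with hB
  set C := T.filter (fun x => 2*x = F) with hC
  have hAB : A.card = B.card := by
    apply Finset.card_bij (fun x _ => F - x)
    · intro x hx
      simp only [hA, hB, hT, Finset.mem_filter, Finset.mem_Ioo] at hx ⊢
      obtain ⟨⟨⟨hx1, hx2⟩, hxS, hFxS⟩, hlt⟩ := hx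
      refine ⟨⟨⟨by omega, by omega⟩, hFxS, ?_⟩, by omega⟩
      rwa [show F - (F - x) = x from by omega]
    · intro x hx y hy h
      simp only [hA, hT, Finset.mem_filter, Finset.mem_Ioo] at hx hy
      omega
    · intro b hbm
      simp only [hA, hB, hT, Finset.mem_filter, Finset.mem_Ioo] at hbm ⊢
      obtain ⟨⟨⟨hb1, hb2⟩, hbS, hFbS⟩, hlt⟩ := hbm
      refine ⟨F - b, ⟨⟨⟨by omega, by omega⟩, hFbS, ?_⟩, by omega⟩, by omega⟩
      rwa [show F - (F - b) = b from by omega]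
  have h1 := Finset.card_filter_add_card_filter_not (s := T) (p := fun x => 2*x < F)
  have h2 := Finset.card_filter_add_card_filter_not
      (s := T.filter (fun x => ¬ 2*x < F)) (p := fun x => 2*x = F)
  rw [Finset.filter_filter, Finset.filter_filter] at h2
  have e1 : T.filter (fun x => ¬ 2*x < F ∧ 2*x = F) = C :=
    Finset.filter_congr (fun x _ => by omega)
  have e2 : T.filter (fun x => ¬ 2*x < F ∧ ¬ 2*x = F) = B :=
    Finset.filter_congr (fun x _ => by omega)
  rw [e1, e2] at h2
  rw [← hA] at h1
  have hsplit : T.card = A.card + B.card + C.card := by omega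
  have hCc : (F % 2 = 0 ∧ C.card = 1) ∨ (F % 2 = 1 ∧ C.card = 0) := by
    rcases Nat.even_or_odd F with he | ho
    · rw [Nat.even_iff] at he
      left
      refine ⟨he, ?_⟩
      have hkS : F / 2 ∉ S := fun h =>
        hFS (by have := hadd _ h _ h; rwa [show F / 2 + F / 2 = F from by omega] at this)
      have hCk : C = {F / 2} := by
        ext x
        simp only [hC, hT, Finset.mem_filter, Finset.mem_Ioo, Finset.mem_singleton]
        constructor
        · rintro ⟨-, hx⟩; omega
        · rintro rfl
          refine ⟨⟨⟨by omega, by omega⟩, hkS, ?_⟩, by omega⟩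
          rwa [show F - F / 2 = F / 2 from by omega]
      rw [hCk, Finset.card_singleton]
    · rw [Nat.odd_iff] at ho
      right
      refine ⟨ho, ?_⟩
      rw [Finset.card_eq_zero]
      ext x
      simp only [hC, Finset.mem_filter, Finset.notMem_empty, iff_false]
      rintro ⟨-, hx⟩
      omega
  rw [Nat.odd_iff]
  omega

theorem bwdNS {K F : ℕ} (hodd : Odd (K + F)) (hKF : K + 1 ≤ F) :
    ∃ S : Set ℕ, IsNumericalSemigroup S ∧ lNS S = K ∧ frobNS S = (F : ℤ) := by
  classical
  rw [Nat.odd_iff] at hodd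
  set m := (F + K + 1) / 2 with hm
  have h2m : 2 * m = F + K + 1 := by omega
  have hmF : m ≤ F := by omega
  have hm1 : 1 ≤ m := by omega
  set S : Set ℕ := insert 0 {n | m ≤ n ∧ n ≠ F} with hS
  have hmemS : ∀ n, n ∈ S ↔ n = 0 ∨ (m ≤ n ∧ n ≠ F) := by
    intro n; simp [hS]
  have h0 : 0 ∈ S := Set.mem_insert _ _
  have hadd : ∀ a ∈ S, ∀ b ∈ S, a + b ∈ S := by
    intro a ha b hb
    rw [hmemS] at ha hb ⊢
    omega
  have hfin : Sᶜ.Finite := by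
    apply (Set.finite_Iic F).subset
    intro n hn
    rw [Set.mem_compl_iff, hmemS] at hn
    simp only [Set.mem_Iic]
    omega
  have hNS : IsNumericalSemigroup S := ⟨h0, hadd, hfin⟩
  have hFrob : frobNS S = (F : ℤ) := by
    unfold frobNS
    apply IsGreatest.csSup_eq
    constructor
    · exact Set.mem_insert_of_mem _ ⟨F, by rw [Set.mem_compl_iff, hmemS]; omega, rfl⟩
    · rintro z (rfl | ⟨n, hn, rfl⟩)
      · omega
      · rw [Set.mem_compl_iff, hmemS] at hn
        have : n ≤ F := by omega
        simp only []
        exact_mod_cast this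
  refine ⟨S, hNS, ?_, hFrob⟩
  have hL := LgapsNS_eq hNS hFrob
  have hLI : LgapsNS S = ↑(Finset.Ioo (F - m) m) := by
    rw [hL]; ext x
    simp only [Set.mem_setOf_eq, Finset.coe_Ioo, Set.mem_Ioo, hmemS]
    omega
  rw [lNS, hLI, Set.ncard_coe_finset, Nat.card_Ioo]
  omega


/-- There exists a numerical semigroup S with l(S) = K and F(S) = F iff
K + F is odd and F ≥ K + 1. -/
theorem stmt17 (K F : ℕ) :
    (∃ S : Set ℕ, IsNumericalSemigroup S ∧ lNS S = K ∧ frobNS S = (F : ℤ)) ↔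
    Odd (K + F) ∧ K + 1 ≤ F := by
  constructor
  · rintro ⟨S, hNS, rfl, hF⟩
    exact fwdNS hNS hF
  · rintro ⟨h1, h2⟩
    exact bwdNS h1 h2
end
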